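/- arXiv:2111.02601 — 9 statements merged into one kernel-verified Lean document; each statement's English description precedes it below -/
import Mathlib

section
/- Let R and S be orthogonal projections on a real Hilbert space H with ker(R) ∩ ker(S) = {0}, let r ∈ ran(R), s ∈ ran(S), and let f₀ be the minimizer of ‖Sf − s‖ subject to Rf = r, and f₁ the minimizer of ‖Rf − r‖ subject to Sf = s. Then R(f₀ − f₁) = S(f₀ − f₁) = f₀ − f₁. -/
open scoped RealInnerProductSpace

/-!
Put `d = f₀ - f₁`. Perturbing each minimiser within its constraint set gives the first-order
conditions `S d ⟂ ker R` and `R d ⟂ ker S`. Then `u = d - R d ∈ ker R` and `v = d - S d ∈ ker S`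
satisfy `u - v = S d - R d`, and expanding `⟪S d - R d, u - v⟫` with these orthogonalities gives
`‖u - v‖² = 0`. Hence `u = v ∈ ker R ⊓ ker S = ⊥`, i.e. `R d = d = S d`.
-/

theorem real_inner_eq_zero_of_forall_norm_le_norm_add_smul {F : Type*}
    [SeminormedAddCommGroup F] [InnerProductSpace ℝ F] {x y : F}
    (h : ∀ t : ℝ, ‖x‖ ≤ ‖x + t • y‖) : ⟪x, y⟫ = 0 := by
  have hquad (t : ℝ) : 0 ≤ 2 * t * ⟪x, y⟫ + t ^ 2 * ‖y‖ ^ 2 := by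
    have hsq : ‖x‖ ^ 2 ≤ ‖x + t • y‖ ^ 2 := pow_le_pow_left₀ (norm_nonneg x) (h t) 2
    rw [norm_add_sq_real, inner_smul_right, norm_smul, mul_pow, Real.norm_eq_abs, sq_abs] at hsq
    linarith
  -- at `t = -⟪x, y⟫ / (‖y‖² + 1)` the quadratic equals `-⟪x, y⟫² (‖y‖² + 2) / (‖y‖² + 1)²`
  have hN : 0 < ‖y‖ ^ 2 + 1 := by positivity
  have key := hquad (-⟪x, y⟫ / (‖y‖ ^ 2 + 1))
  field_simp at key
  nlinarith [sq_nonneg ⟪x, y⟫, sq_nonneg ‖y‖]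

theorem inner_sub_map_eq_zero_of_isMinOn {E F G : Type*} [AddCommGroup E] [Module ℝ E]
    [SeminormedAddCommGroup F] [InnerProductSpace ℝ F] [AddCommGroup G] [Module ℝ G]
    {A : E →ₗ[ℝ] F} {P : E →ₗ[ℝ] G} {b : F} {c : G} {f₀ : E} (hf₀ : P f₀ = c)
    (hmin : IsMinOn (fun f => ‖A f - b‖) {f | P f = c} f₀) {g : E} (hg : g ∈ LinearMap.ker P) :
    ⟪A f₀ - b, A g⟫ = 0 := by
  refine real_inner_eq_zero_of_forall_norm_le_norm_add_smul fun t => ?_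
  have hmem : P (f₀ + t • g) = c := by
    rw [map_add, map_smul, LinearMap.mem_ker.mp hg, smul_zero, add_zero, hf₀]
  have hle : ‖A f₀ - b‖ ≤ ‖A (f₀ + t • g) - b‖ := hmin hmem
  rwa [map_add, map_smul, add_sub_right_comm] at hle

namespace LinearMap.IsSymmetricProjection

open scoped InnerProductSpace

variable {𝕜 E : Type*} [RCLike 𝕜] [NormedAddCommGroup E] [InnerProductSpace 𝕜 E]
  {R S : E →ₗ[𝕜] E}

theorem apply_apply (hR : R.IsSymmetricProjection) (x : E) : R (R x) = R x :=
  LinearMap.congr_fun hR.isIdempotentElem x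

theorem sub_apply_mem_ker (hR : R.IsSymmetricProjection) (x : E) : x - R x ∈ ker R :=
  sub_mem_ker_iff.mpr (hR.apply_apply x).symm

theorem inner_apply_eq_zero_of_mem_ker (hR : R.IsSymmetricProjection) (x : E) {y : E}
    (hy : y ∈ ker R) : ⟪R x, y⟫_𝕜 = 0 := by
  rw [hR.isSymmetric, mem_ker.mp hy, inner_zero_right]

theorem inner_apply_apply (hR : R.IsSymmetricProjection) (x y : E) :
    ⟪R x, R y⟫_𝕜 = ⟪R x, y⟫_𝕜 := by
  rw [← hR.isSymmetric, hR.apply_apply]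

theorem apply_eq_self_of_apply_mem_orthogonal_ker (hR : R.IsSymmetricProjection)
    (hS : S.IsSymmetricProjection) (hker : ker R ⊓ ker S = ⊥) {d : E}
    (hSd : S d ∈ (ker R)ᗮ) (hRd : R d ∈ (ker S)ᗮ) : R d = d ∧ S d = d := by
  set u := d - R d
  set v := d - S d
  have hu : u ∈ ker R := hR.sub_apply_mem_ker d
  have hv : v ∈ ker S := hS.sub_apply_mem_ker d
  have hSu : ⟪S d, u⟫_𝕜 = 0 := (Submodule.mem_orthogonal' _ _).mp hSd u hu
  have hRv : ⟪R d, v⟫_𝕜 = 0 := (Submodule.mem_orthogonal' _ _).mp hRd v hv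
  have hSv : ⟪S d, v⟫_𝕜 = 0 := hS.inner_apply_eq_zero_of_mem_ker d hv
  have hRu : ⟪R d, u⟫_𝕜 = 0 := hR.inner_apply_eq_zero_of_mem_ker d hu
  have hdiff : u - v = S d - R d := by simp only [u, v]; abel
  have huv : ⟪S d - R d, u - v⟫_𝕜 = 0 := by
    simp only [inner_sub_left, inner_sub_right, hSu, hRv, hSv, hRu, sub_zero]
  rw [← hdiff] at huv
  have hu_eq_v : u = v := sub_eq_zero.mp (inner_self_eq_zero.mp huv)
  have hu0 : u = 0 := by
    rw [← Submodule.mem_bot 𝕜, ← hker]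
    exact ⟨hu, hu_eq_v ▸ hv⟩
  have hv0 : v = 0 := hu_eq_v ▸ hu0
  exact ⟨(sub_eq_zero.mp hu0).symm, (sub_eq_zero.mp hv0).symm⟩

end LinearMap.IsSymmetricProjection

theorem stmt_3_general
    {H : Type*} [NormedAddCommGroup H] [InnerProductSpace ℝ H] [CompleteSpace H]
    (R S : H →L[ℝ] H)
    (hR : IsSelfAdjoint R) (hRi : R ∘L R = R)
    (hS : IsSelfAdjoint S) (hSi : S ∘L S = S)
    (hker : LinearMap.ker (R : H →ₗ[ℝ] H) ⊓ LinearMap.ker (S : H →ₗ[ℝ] H) = ⊥)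
    (r s : H)
    (f₀ f₁ : H)
    (hf₀ : R f₀ = r ∧ IsMinOn (fun f : H => ‖S f - s‖) {f : H | R f = r} f₀)
    (hf₁ : S f₁ = s ∧ IsMinOn (fun f : H => ‖R f - r‖) {f : H | S f = s} f₁) :
    R (f₀ - f₁) = f₀ - f₁ ∧ S (f₀ - f₁) = f₀ - f₁ := by
  obtain ⟨hRf₀, hmin₀⟩ := hf₀
  obtain ⟨hSf₁, hmin₁⟩ := hf₁
  have hRp : (R : H →ₗ[ℝ] H).IsSymmetricProjection :=
    ContinuousLinearMap.isStarProjection_iff_isSymmetricProjection.mp ⟨hRi, hR⟩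
  have hSp : (S : H →ₗ[ℝ] H).IsSymmetricProjection :=
    ContinuousLinearMap.isStarProjection_iff_isSymmetricProjection.mp ⟨hSi, hS⟩
  refine hRp.apply_eq_self_of_apply_mem_orthogonal_ker hSp hker
    ((Submodule.mem_orthogonal' _ _).mpr fun g hg => ?_)
    ((Submodule.mem_orthogonal' _ _).mpr fun g hg => ?_)
  · rw [← hSp.inner_apply_apply, ContinuousLinearMap.coe_coe, map_sub, hSf₁]
    exact inner_sub_map_eq_zero_of_isMinOn (A := (S : H →ₗ[ℝ] H)) hRf₀ hmin₀ hg
  · rw [← hRp.inner_apply_apply, ContinuousLinearMap.coe_coe, map_sub, hRf₀, ← neg_sub,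
      inner_neg_left, neg_eq_zero]
    exact inner_sub_map_eq_zero_of_isMinOn (A := (R : H →ₗ[ℝ] H)) hSf₁ hmin₁ hg

/-- For orthogonal projections `R, S` with trivial common kernel, the interpolants
`f₀` and `f₁` satisfy `R(f₀ - f₁) = S(f₀ - f₁) = f₀ - f₁`. -/
theorem stmt_3
    {H : Type*} [NormedAddCommGroup H] [InnerProductSpace ℝ H] [CompleteSpace H]
    (R S : H →L[ℝ] H)
    (hR : IsSelfAdjoint R) (hRi : R ∘L R = R)
    (hS : IsSelfAdjoint S) (hSi : S ∘L S = S)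
    (hker : LinearMap.ker (R : H →ₗ[ℝ] H) ⊓ LinearMap.ker (S : H →ₗ[ℝ] H) = ⊥)
    (r s : H) (hr : r ∈ LinearMap.range (R : H →ₗ[ℝ] H)) (hs : s ∈ LinearMap.range (S : H →ₗ[ℝ] H))
    (f₀ f₁ : H)
    (hf₀ : R f₀ = r ∧ IsMinOn (fun f : H => ‖S f - s‖) {f : H | R f = r} f₀)
    (hf₁ : S f₁ = s ∧ IsMinOn (fun f : H => ‖R f - r‖) {f : H | S f = s} f₁) :
    R (f₀ - f₁) = f₀ - f₁ ∧ S (f₀ - f₁) = f₀ - f₁ :=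
  stmt_3_general R S hR hRi hS hSi hker r s f₀ f₁ hf₀ hf₁
end

section
/- Let R and S be orthogonal projections on a real Hilbert space H with ker(R) ∩ ker(S) = {0}, r ∈ ran(R), s ∈ ran(S), τ ∈ (0,1), and let f_τ = (1−τ)f₀ + τ f₁ be the minimizer of (1−τ)‖Rf − r‖² + τ‖Sf − s‖². Then ‖R f_τ − r‖ = τ ‖f₁ − f₀‖ and ‖S f_τ − s‖ = (1−τ)‖f₁ − f₀‖. -/
/-!
Write `u = f₀ - f₁`. Since `R f₀ = r` and `S f₁ = s`, the residuals of `f₀` and `f₁` are `S u` and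
`-R u`, and the first-order conditions of the two constrained problems say `S u ⊥ ker R` and
`R u ⊥ ker S`. As `R u ⊥ ker R` and `S u ⊥ ker S` hold for any orthogonal projections, the vector
`S u - R u = (u - R u) - (u - S u)` lies both in `ker R ⊔ ker S` and in its orthogonal complement,
so `R u = S u`; then `u - R u ∈ ker R ⊓ ker S = ⊥`, i.e. `R u = S u = u`. With this,
`R f_τ - r = τ • (f₁ - f₀)` and `S f_τ - s = (1 - τ) • (f₀ - f₁)`.
-/

open scoped RealInnerProductSpace

open LinearMap (ker)

section Variational

variable {F : Type*} [NormedAddCommGroup F] [InnerProductSpace ℝ F]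

theorem inner_eq_zero_of_forall_norm_le_norm_add_smul {x y : F}
    (h : ∀ t : ℝ, ‖x‖ ≤ ‖x + t • y‖) : ⟪x, y⟫ = 0 := by
  have hmin : IsLocalMin (fun t : ℝ => ‖x + t • y‖ ^ 2) 0 :=
    Filter.Eventually.of_forall fun t => by
      simpa using pow_le_pow_left₀ (norm_nonneg x) (h t) 2
  have hderiv := (((hasDerivAt_id' (0 : ℝ)).smul_const y).const_add x).norm_sq
  simpa using hmin.hasDerivAt_eq_zero hderiv

variable {E G : Type*} [AddCommGroup E] [Module ℝ E] [AddCommGroup G] [Module ℝ G]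

theorem inner_sub_apply_eq_zero_of_isMinOn {A : E →ₗ[ℝ] F} {B : E →ₗ[ℝ] G} {c : F} {d : G}
    {f₀ : E} (hf₀ : B f₀ = d) (hmin : IsMinOn (fun f => ‖A f - c‖) {f | B f = d} f₀)
    {k : E} (hk : k ∈ ker B) : ⟪A f₀ - c, A k⟫ = 0 := by
  refine inner_eq_zero_of_forall_norm_le_norm_add_smul fun t => ?_
  have hmem : B (f₀ + t • k) = d := by
    rw [map_add, map_smul, LinearMap.mem_ker.mp hk, smul_zero, add_zero, hf₀]
  simpa [add_sub_right_comm] using hmin hmem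

end Variational

namespace IsStarProjection

variable {E : Type*} [NormedAddCommGroup E] [InnerProductSpace ℝ E] [CompleteSpace E]
  {P Q : E →L[ℝ] E}

theorem apply_apply (hP : IsStarProjection P) (x : E) : P (P x) = P x :=
  congr($(hP.isIdempotentElem.eq) x)

theorem inner_apply_left (hP : IsStarProjection P) (x y : E) : ⟪P x, y⟫ = ⟪x, P y⟫ :=
  hP.isSelfAdjoint.isSymmetric x y

theorem inner_apply_apply (hP : IsStarProjection P) (x y : E) : ⟪P x, P y⟫ = ⟪P x, y⟫ := by
  rw [← hP.inner_apply_left, hP.apply_apply]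

theorem sub_apply_mem_ker (hP : IsStarProjection P) (x : E) : x - P x ∈ ker (P : E →ₗ[ℝ] E) := by
  simp [hP.apply_apply]

theorem apply_mem_orthogonal_ker (hP : IsStarProjection P) (x : E) :
    P x ∈ (ker (P : E →ₗ[ℝ] E))ᗮ := by
  rw [Submodule.mem_orthogonal]
  intro k hk
  rw [← hP.inner_apply_left, show P k = 0 from hk, inner_zero_left]

theorem apply_sub_mem_orthogonal_ker_of_isMinOn (hQ : IsStarProjection Q) {f₀ g d : E}
    (hf₀ : P f₀ = d) (hmin : IsMinOn (fun f => ‖Q f - Q g‖) {f | P f = d} f₀) :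
    Q (f₀ - g) ∈ (ker (P : E →ₗ[ℝ] E))ᗮ := by
  refine (Submodule.mem_orthogonal' _ _).mpr fun k hk => ?_
  have := inner_sub_apply_eq_zero_of_isMinOn (A := (Q : E →ₗ[ℝ] E)) hf₀ hmin hk
  simp only [ContinuousLinearMap.coe_coe] at this
  rwa [← map_sub, hQ.inner_apply_apply] at this

theorem apply_eq_self_of_mem_orthogonal_ker (hP : IsStarProjection P) (hQ : IsStarProjection Q)
    (hPQ : ker (P : E →ₗ[ℝ] E) ⊓ ker (Q : E →ₗ[ℝ] E) = ⊥) {u : E}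
    (hQu : Q u ∈ (ker (P : E →ₗ[ℝ] E))ᗮ) (hPu : P u ∈ (ker (Q : E →ₗ[ℝ] E))ᗮ) :
    P u = u ∧ Q u = u := by
  have hPQu : Q u - P u = 0 := by
    have hsup : Q u - P u ∈ ker (P : E →ₗ[ℝ] E) ⊔ ker (Q : E →ₗ[ℝ] E) := by
      rw [show Q u - P u = (u - P u) - (u - Q u) by abel]
      exact Submodule.sub_mem_sup (hP.sub_apply_mem_ker u) (hQ.sub_apply_mem_ker u)
    have hperp : Q u - P u ∈ (ker (P : E →ₗ[ℝ] E) ⊔ ker (Q : E →ₗ[ℝ] E))ᗮ := by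
      rw [← Submodule.inf_orthogonal]
      exact ⟨sub_mem hQu (hP.apply_mem_orthogonal_ker u),
        sub_mem (hQ.apply_mem_orthogonal_ker u) hPu⟩
    have hbot := Submodule.mem_inf.mpr ⟨hsup, hperp⟩
    rwa [Submodule.inf_orthogonal_eq_bot, Submodule.mem_bot] at hbot
  have hQP : Q u = P u := sub_eq_zero.mp hPQu
  have hker : u - P u ∈ ker (P : E →ₗ[ℝ] E) ⊓ ker (Q : E →ₗ[ℝ] E) :=
    ⟨hP.sub_apply_mem_ker u, hQP ▸ hQ.sub_apply_mem_ker u⟩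
  rw [hPQ, Submodule.mem_bot, sub_eq_zero] at hker
  exact ⟨hker.symm, hQP.trans hker.symm⟩

end IsStarProjection

theorem stmt_5_general
    {H : Type*} [NormedAddCommGroup H] [InnerProductSpace ℝ H] [CompleteSpace H]
    (R S : H →L[ℝ] H)
    (hR : IsSelfAdjoint R) (hRi : R ∘L R = R)
    (hS : IsSelfAdjoint S) (hSi : S ∘L S = S)
    (hker : LinearMap.ker (R : H →ₗ[ℝ] H) ⊓ LinearMap.ker (S : H →ₗ[ℝ] H) = ⊥)
    (r s : H)
    (τ : ℝ) (hτ : τ ∈ Set.Ioo (0 : ℝ) 1)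
    (f₀ f₁ : H)
    (hf₀ : R f₀ = r ∧ IsMinOn (fun f : H => ‖S f - s‖) {f : H | R f = r} f₀)
    (hf₁ : S f₁ = s ∧ IsMinOn (fun f : H => ‖R f - r‖) {f : H | S f = s} f₁) :
    ‖R ((1 - τ) • f₀ + τ • f₁) - r‖ = τ * ‖f₁ - f₀‖ ∧
    ‖S ((1 - τ) • f₀ + τ • f₁) - s‖ = (1 - τ) * ‖f₁ - f₀‖ := by
  obtain ⟨hRf₀, hmin₀⟩ := hf₀
  obtain ⟨hSf₁, hmin₁⟩ := hf₁
  have hRp : IsStarProjection R := ⟨hRi, hR⟩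
  have hSp : IsStarProjection S := ⟨hSi, hS⟩
  have hSu_perp := hSp.apply_sub_mem_orthogonal_ker_of_isMinOn hRf₀ (by rwa [← hSf₁] at hmin₀)
  have hRu_perp := hRp.apply_sub_mem_orthogonal_ker_of_isMinOn hSf₁ (by rwa [← hRf₀] at hmin₁)
  obtain ⟨hRu, hSu⟩ := hRp.apply_eq_self_of_mem_orthogonal_ker hSp hker hSu_perp
    (by simpa only [map_sub, neg_sub] using neg_mem hRu_perp)
  have hRf₁ : R f₁ = r + (f₁ - f₀) := by
    linear_combination (norm := module) hRf₀ - hRu + map_sub R f₀ f₁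
  have hSf₀ : S f₀ = s + (f₀ - f₁) := by
    linear_combination (norm := module) hSf₁ + hSu - map_sub S f₀ f₁
  have hτ₀ : 0 ≤ τ := hτ.1.le
  have hτ₁ : 0 ≤ 1 - τ := sub_nonneg.mpr hτ.2.le
  constructor
  · calc ‖R ((1 - τ) • f₀ + τ • f₁) - r‖ = ‖τ • (f₁ - f₀)‖ := by
          rw [map_add, map_smul, map_smul, hRf₀, hRf₁]
          congr 1; module
      _ = τ * ‖f₁ - f₀‖ := by rw [norm_smul, Real.norm_of_nonneg hτ₀]
  · calc ‖S ((1 - τ) • f₀ + τ • f₁) - s‖ = ‖(1 - τ) • (f₀ - f₁)‖ := by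
          rw [map_add, map_smul, map_smul, hSf₁, hSf₀]
          congr 1; module
      _ = (1 - τ) * ‖f₁ - f₀‖ := by rw [norm_smul, Real.norm_of_nonneg hτ₁, norm_sub_rev]

/-- Residual norms of the regularized solution `f_τ = (1-τ)f₀ + τf₁`:
`‖Rf_τ - r‖ = τ‖f₁ - f₀‖` and `‖Sf_τ - s‖ = (1-τ)‖f₁ - f₀‖`. -/
theorem stmt_5
    {H : Type*} [NormedAddCommGroup H] [InnerProductSpace ℝ H] [CompleteSpace H]
    (R S : H →L[ℝ] H)
    (hR : IsSelfAdjoint R) (hRi : R ∘L R = R)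
    (hS : IsSelfAdjoint S) (hSi : S ∘L S = S)
    (hker : LinearMap.ker (R : H →ₗ[ℝ] H) ⊓ LinearMap.ker (S : H →ₗ[ℝ] H) = ⊥)
    (r s : H) (hr : r ∈ LinearMap.range (R : H →ₗ[ℝ] H)) (hs : s ∈ LinearMap.range (S : H →ₗ[ℝ] H))
    (τ : ℝ) (hτ : τ ∈ Set.Ioo (0 : ℝ) 1)
    (f₀ f₁ : H)
    (hf₀ : R f₀ = r ∧ IsMinOn (fun f : H => ‖S f - s‖) {f : H | R f = r} f₀)
    (hf₁ : S f₁ = s ∧ IsMinOn (fun f : H => ‖R f - r‖) {f : H | S f = s} f₁) :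
    ‖R ((1 - τ) • f₀ + τ • f₁) - r‖ = τ * ‖f₁ - f₀‖ ∧
    ‖S ((1 - τ) • f₀ + τ • f₁) - s‖ = (1 - τ) * ‖f₁ - f₀‖ :=
  stmt_5_general R S hR hRi hS hSi hker r s τ hτ f₀ f₁ hf₀ hf₁
end

section
/- Let R and S be orthogonal projections on a real Hilbert space H with ker(R) ∩ ker(S) = {0}, r ∈ ran(R), s ∈ ran(S), τ ∈ (0,1), and f_τ the minimizer of (1−τ)‖Rf − r‖² + τ‖Sf − s‖². Then f_τ also minimizes f ↦ max{(1−τ)‖Rf − r‖, τ‖Sf − s‖} over H. -/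
open scoped RealInnerProductSpace

/-!
Write `u = R fτ - r`, `v = S fτ - s`. Since `r ∈ ran R` and `R` is an orthogonal projection,
`R u = u`, and likewise `S v = v`; so the normal equation of the quadratic functional at its
minimizer, tested against `(1 - τ) u + τ v`, says `‖(1 - τ) u + τ v‖² = 0`. Hence
`(1 - τ)‖u‖ = τ‖v‖`: both terms of the max are balanced at `fτ`. For any other `f`, the weighted
AM bound `max{p, q}² ≥ τ p² + (1 - τ) q²` applied to the two terms of the max at `f` bounds the
max from below by `τ(1 - τ)` times the quadratic functional at `f`, hence at `fτ`, and by balance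
this is exactly the square of the max at `fτ`.
-/

open Set

section NormalEquation

variable {E F G : Type*} [NormedAddCommGroup E] [NormedSpace ℝ E]
  [NormedAddCommGroup F] [InnerProductSpace ℝ F] [NormedAddCommGroup G] [InnerProductSpace ℝ G]

theorem hasFDerivAt_norm_apply_sub_sq (T : E →L[ℝ] F) (c : F) (x : E) :
    HasFDerivAt (fun f => ‖T f - c‖ ^ 2) (2 • (innerSL ℝ (T x - c)).comp T) x :=
  (T.hasFDerivAt.sub_const c).norm_sq

theorem IsMinOn.inner_add_inner_eq_zero {T : E →L[ℝ] F} {U : E →L[ℝ] G} {c : F} {d : G}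
    {a b : ℝ} {x : E}
    (hx : IsMinOn (fun f => a * ‖T f - c‖ ^ 2 + b * ‖U f - d‖ ^ 2) univ x) (h : E) :
    a * ⟪T x - c, T h⟫ + b * ⟪U x - d, U h⟫ = 0 := by
  have hderiv := ((hasFDerivAt_norm_apply_sub_sq T c x).const_mul a).add
    ((hasFDerivAt_norm_apply_sub_sq U d x).const_mul b)
  have hzero := congrArg (· h) ((hx.isLocalMin Filter.univ_mem).hasFDerivAt_eq_zero hderiv)
  simp only [add_apply, smul_apply, ContinuousLinearMap.comp_apply, innerSL_apply_apply,
    smul_eq_mul, nsmul_eq_mul, Nat.cast_ofNat, zero_apply] at hzero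
  linarith

end NormalEquation

theorem inner_apply_eq_of_mem_range {E : Type*} [NormedAddCommGroup E] [InnerProductSpace ℝ E]
    [CompleteSpace E] {P : E →L[ℝ] E} (hP : IsSelfAdjoint P) (hPP : P ∘L P = P) {z : E}
    (hz : z ∈ LinearMap.range (P : E →ₗ[ℝ] E)) (h : E) : ⟪z, P h⟫ = ⟪z, h⟫ := by
  obtain ⟨y, rfl⟩ := hz
  calc ⟪P y, P h⟫ = ⟪P (P y), h⟫ := (hP.isSymmetric (P y) h).symm
    _ = ⟪P y, h⟫ := by rw [← ContinuousLinearMap.comp_apply, hPP]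

theorem smul_norm_eq_of_smul_add_smul_eq_zero {E : Type*} [NormedAddCommGroup E]
    [NormedSpace ℝ E] {a b : ℝ} (ha : 0 ≤ a) (hb : 0 ≤ b) {u v : E}
    (h : a • u + b • v = 0) : a * ‖u‖ = b * ‖v‖ := by
  have := congrArg norm (eq_neg_of_add_eq_zero_left h)
  rwa [norm_neg, norm_smul, norm_smul, Real.norm_of_nonneg ha, Real.norm_of_nonneg hb] at this

theorem mul_sq_add_mul_sq_le_max_sq {p q w₁ w₂ : ℝ} (hp : 0 ≤ p) (hq : 0 ≤ q)
    (hw₁ : 0 ≤ w₁) (hw₂ : 0 ≤ w₂) : w₁ * p ^ 2 + w₂ * q ^ 2 ≤ (w₁ + w₂) * max p q ^ 2 := by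
  have hp' : p ^ 2 ≤ max p q ^ 2 := pow_le_pow_left₀ hp (le_max_left p q) 2
  have hq' : q ^ 2 ≤ max p q ^ 2 := pow_le_pow_left₀ hq (le_max_right p q) 2
  nlinarith

theorem le_max_of_balanced {a b x y x₀ y₀ : ℝ} (ha : 0 < a) (hb : 0 < b) (hx : 0 ≤ x)
    (hy : 0 ≤ y) (hbal : a * x₀ = b * y₀)
    (hmin : a * x₀ ^ 2 + b * y₀ ^ 2 ≤ a * x ^ 2 + b * y ^ 2) :
    a * x₀ ≤ max (a * x) (b * y) := by
  have hsq : (a + b) * (a * x₀) ^ 2 ≤ (a + b) * max (a * x) (b * y) ^ 2 :=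
    calc (a + b) * (a * x₀) ^ 2 = a * b * (a * x₀ ^ 2 + b * y₀ ^ 2) := by
          linear_combination a * (a * x₀ + b * y₀) * hbal
      _ ≤ a * b * (a * x ^ 2 + b * y ^ 2) := by gcongr
      _ = b * (a * x) ^ 2 + a * (b * y) ^ 2 := by ring
      _ ≤ (b + a) * max (a * x) (b * y) ^ 2 :=
          mul_sq_add_mul_sq_le_max_sq (by positivity) (by positivity) hb.le ha.le
      _ = (a + b) * max (a * x) (b * y) ^ 2 := by ring
  have hmax : 0 ≤ max (a * x) (b * y) := le_max_of_le_left (by positivity)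
  exact (le_abs_self _).trans
    (abs_le_of_sq_le_sq (le_of_mul_le_mul_left hsq (by positivity)) hmax)

theorem stmt_6_general
    {H : Type*} [NormedAddCommGroup H] [InnerProductSpace ℝ H] [CompleteSpace H]
    (R S : H →L[ℝ] H)
    (hR : IsSelfAdjoint R) (hRi : R ∘L R = R)
    (hS : IsSelfAdjoint S) (hSi : S ∘L S = S)
    (r s : H) (hr : r ∈ LinearMap.range (R : H →ₗ[ℝ] H)) (hs : s ∈ LinearMap.range (S : H →ₗ[ℝ] H))
    (τ : ℝ) (hτ : τ ∈ Set.Ioo (0 : ℝ) 1)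
    (fτ : H)
    (hfτ : IsMinOn (fun f : H => (1 - τ) * ‖R f - r‖ ^ 2 + τ * ‖S f - s‖ ^ 2) Set.univ fτ) :
    IsMinOn (fun f : H => max ((1 - τ) * ‖R f - r‖) (τ * ‖S f - s‖)) Set.univ fτ := by
  obtain ⟨hτ₀, hτ₁⟩ := hτ
  have hu : R fτ - r ∈ LinearMap.range (R : H →ₗ[ℝ] H) :=
    sub_mem (LinearMap.mem_range_self _ _) hr
  have hv : S fτ - s ∈ LinearMap.range (S : H →ₗ[ℝ] H) :=
    sub_mem (LinearMap.mem_range_self _ _) hs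
  set w := (1 - τ) • (R fτ - r) + τ • (S fτ - s)
  have hw : w = 0 := by
    have hnormal := hfτ.inner_add_inner_eq_zero w
    rw [inner_apply_eq_of_mem_range hR hRi hu, inner_apply_eq_of_mem_range hS hSi hv] at hnormal
    rw [← inner_self_eq_zero (𝕜 := ℝ), inner_add_left, real_inner_smul_left,
      real_inner_smul_left, hnormal]
  have hbal := smul_norm_eq_of_smul_add_smul_eq_zero (by linarith) hτ₀.le hw
  intro f _
  change max ((1 - τ) * ‖R fτ - r‖) (τ * ‖S fτ - s‖) ≤ _
  rw [← hbal, max_self]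
  exact le_max_of_balanced (by linarith) hτ₀ (norm_nonneg _) (norm_nonneg _) hbal
    (hfτ (mem_univ f))

/-- The minimizer of the quadratic regularization functional also minimizes
the minimax objective `max{(1-τ)‖Rf - r‖, τ‖Sf - s‖}`. -/
theorem stmt_6
    {H : Type*} [NormedAddCommGroup H] [InnerProductSpace ℝ H] [CompleteSpace H]
    (R S : H →L[ℝ] H)
    (hR : IsSelfAdjoint R) (hRi : R ∘L R = R)
    (hS : IsSelfAdjoint S) (hSi : S ∘L S = S)
    (hker : LinearMap.ker (R : H →ₗ[ℝ] H) ⊓ LinearMap.ker (S : H →ₗ[ℝ] H) = ⊥)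
    (r s : H) (hr : r ∈ LinearMap.range (R : H →ₗ[ℝ] H)) (hs : s ∈ LinearMap.range (S : H →ₗ[ℝ] H))
    (τ : ℝ) (hτ : τ ∈ Set.Ioo (0 : ℝ) 1)
    (fτ : H)
    (hfτ : IsMinOn (fun f : H => (1 - τ) * ‖R f - r‖ ^ 2 + τ * ‖S f - s‖ ^ 2) Set.univ fτ) :
    IsMinOn (fun f : H => max ((1 - τ) * ‖R f - r‖) (τ * ‖S f - s‖)) Set.univ fτ :=
  stmt_6_general R S hR hRi hS hSi r s hr hs τ hτ fτ hfτ
end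

section
/- Let H be a real Hilbert space, R : H → H₁, S : H → H₂ bounded linear maps, r ∈ H₁, s ∈ H₂, ε, η > 0, and f♯ ∈ H. Let h♯ maximize ‖h‖ subject to ‖Rf♯ − r + Rh‖ ≤ ε and ‖Sf♯ − s + Sh‖ ≤ η. If ⟨R*(Rf♯ − r), h♯⟩ = 0 and ⟨S*(Sf♯ − s), h♯⟩ = 0, then for every g ∈ H, sup{‖f − g‖ : ‖Rf − r‖ ≤ ε, ‖Sf − s‖ ≤ η} ≥ sup{‖f − f♯‖ : ‖Rf − r‖ ≤ ε, ‖Sf − s‖ ≤ η}; that is, f♯ is a Chebyshev center of the set {f : ‖Rf − r‖ ≤ ε, ‖Sf − s‖ ≤ η}. -/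
open scoped RealInnerProductSpace

/-- If `h♯` maximizes the norm over admissible perturbations around `f♯` and the two
orthogonality conditions hold, then `f♯` is a Chebyshev center of
`{f : ‖Rf - r‖ ≤ ε, ‖Sf - s‖ ≤ η}`. -/
theorem stmt_7
    {H H₁ H₂ : Type*}
    [NormedAddCommGroup H] [InnerProductSpace ℝ H] [CompleteSpace H]
    [NormedAddCommGroup H₁] [InnerProductSpace ℝ H₁] [CompleteSpace H₁]
    [NormedAddCommGroup H₂] [InnerProductSpace ℝ H₂] [CompleteSpace H₂]
    (R : H →L[ℝ] H₁) (S : H →L[ℝ] H₂) (r : H₁) (s : H₂)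
    (ε η : ℝ) (hε : 0 < ε) (hη : 0 < η) (fs : H) (hs : H)
    (hfeas : ‖R fs - r + R hs‖ ≤ ε ∧ ‖S fs - s + S hs‖ ≤ η)
    (hmax : IsMaxOn (fun h : H => ‖h‖)
      {h : H | ‖R fs - r + R h‖ ≤ ε ∧ ‖S fs - s + S h‖ ≤ η} hs)
    (horth₁ : ⟪ContinuousLinearMap.adjoint R (R fs - r), hs⟫ = 0)
    (horth₂ : ⟪ContinuousLinearMap.adjoint S (S fs - s), hs⟫ = 0) :
    ∀ g : H,
      sSup {d : ℝ | ∃ f : H, ‖R f - r‖ ≤ ε ∧ ‖S f - s‖ ≤ η ∧ d = ‖f - g‖}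
        ≥ sSup {d : ℝ | ∃ f : H, ‖R f - r‖ ≤ ε ∧ ‖S f - s‖ ≤ η ∧ d = ‖f - fs‖} := by
  intro g
  -- inner product orthogonality in the target spaces
  have hR : ⟪R fs - r, R hs⟫ = 0 := by
    rw [← ContinuousLinearMap.adjoint_inner_left]; exact horth₁
  have hS : ⟪S fs - s, S hs⟫ = 0 := by
    rw [← ContinuousLinearMap.adjoint_inner_left]; exact horth₂
  -- norms of ± perturbations agree
  have keyR : ‖R fs - r - R hs‖ = ‖R fs - r + R hs‖ := by
    have h1 := norm_add_sq_real (R fs - r) (R hs)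
    have h2 := norm_sub_sq_real (R fs - r) (R hs)
    nlinarith [norm_nonneg (R fs - r - R hs), norm_nonneg (R fs - r + R hs)]
  have keyS : ‖S fs - s - S hs‖ = ‖S fs - s + S hs‖ := by
    have h1 := norm_add_sq_real (S fs - s) (S hs)
    have h2 := norm_sub_sq_real (S fs - s) (S hs)
    nlinarith [norm_nonneg (S fs - s - S hs), norm_nonneg (S fs - s + S hs)]
  -- fs + hs and fs - hs are feasible
  have eRp : R (fs + hs) - r = R fs - r + R hs := by rw [map_add]; abel
  have eSp : S (fs + hs) - s = S fs - s + S hs := by rw [map_add]; abel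
  have eRm : R (fs - hs) - r = R fs - r - R hs := by rw [map_sub]; abel
  have eSm : S (fs - hs) - s = S fs - s - S hs := by rw [map_sub]; abel
  have hplus : ‖R (fs + hs) - r‖ ≤ ε ∧ ‖S (fs + hs) - s‖ ≤ η := by
    rw [eRp, eSp]; exact hfeas
  have hminus : ‖R (fs - hs) - r‖ ≤ ε ∧ ‖S (fs - hs) - s‖ ≤ η := by
    rw [eRm, eSm, keyR, keyS]; exact hfeas
  -- any feasible f satisfies ‖f - fs‖ ≤ ‖hs‖
  have hbnd : ∀ f : H, ‖R f - r‖ ≤ ε → ‖S f - s‖ ≤ η → ‖f - fs‖ ≤ ‖hs‖ := by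
    intro f h1 h2
    have hmem : (f - fs) ∈ {h : H | ‖R fs - r + R h‖ ≤ ε ∧ ‖S fs - s + S h‖ ≤ η} := by
      constructor
      · have : R fs - r + R (f - fs) = R f - r := by rw [map_sub]; abel
        rw [this]; exact h1
      · have : S fs - s + S (f - fs) = S f - s := by rw [map_sub]; abel
        rw [this]; exact h2
    exact hmax hmem
  set A := {d : ℝ | ∃ f : H, ‖R f - r‖ ≤ ε ∧ ‖S f - s‖ ≤ η ∧ d = ‖f - g‖}
  set B := {d : ℝ | ∃ f : H, ‖R f - r‖ ≤ ε ∧ ‖S f - s‖ ≤ η ∧ d = ‖f - fs‖}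
  have hBne : B.Nonempty := ⟨‖(fs + hs) - fs‖, fs + hs, hplus.1, hplus.2, rfl⟩
  have hAbdd : BddAbove A := by
    refine ⟨‖hs‖ + ‖fs - g‖, ?_⟩
    rintro d ⟨f, h1, h2, rfl⟩
    calc ‖f - g‖ = ‖(f - fs) + (fs - g)‖ := by rw [sub_add_sub_cancel]
      _ ≤ ‖f - fs‖ + ‖fs - g‖ := norm_add_le _ _
      _ ≤ ‖hs‖ + ‖fs - g‖ := by linarith [hbnd f h1 h2]
  have hBle : sSup B ≤ ‖hs‖ := by
    apply csSup_le hBne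
    rintro d ⟨f, h1, h2, rfl⟩
    exact hbnd f h1 h2
  have hAp : ‖(fs + hs) - g‖ ∈ A := ⟨fs + hs, hplus.1, hplus.2, rfl⟩
  have hAm : ‖(fs - hs) - g‖ ∈ A := ⟨fs - hs, hminus.1, hminus.2, rfl⟩
  have htri : 2 * ‖hs‖ ≤ ‖(fs + hs) - g‖ + ‖(fs - hs) - g‖ := by
    have : ((fs + hs) - g) - ((fs - hs) - g) = (2 : ℝ) • hs := by
      rw [two_smul]; abel
    calc 2 * ‖hs‖ = ‖(2 : ℝ) • hs‖ := by
          rw [norm_smul]; simp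
      _ = ‖((fs + hs) - g) - ((fs - hs) - g)‖ := by rw [this]
      _ ≤ ‖(fs + hs) - g‖ + ‖(fs - hs) - g‖ := norm_sub_le _ _
  have hAge : ‖hs‖ ≤ sSup A := by
    rcases le_total ‖(fs + hs) - g‖ ‖(fs - hs) - g‖ with h | h
    · calc ‖hs‖ ≤ ‖(fs - hs) - g‖ := by linarith
        _ ≤ sSup A := le_csSup hAbdd hAm
    · calc ‖hs‖ ≤ ‖(fs + hs) - g‖ := by linarith
        _ ≤ sSup A := le_csSup hAbdd hAp
  linarith
end

section
/- Let H be a real Hilbert space, R : H → H₁, S : H → H₂ bounded linear maps, r ∈ H₁, s ∈ H₂, ε, η > 0, and f♯, h♯ ∈ H. Suppose ‖Rf♯ − r + Rh♯‖² = ε², ‖Sf♯ − s + Sh♯‖² = η², and there exist a, b ≥ 0 with a R*R + b S*S ⪰ Id and a R*(Rf♯ − r) + b S*(Sf♯ − s) + (a R*R + b S*S) h♯ = h♯. Then h♯ maximizes ‖h‖ over all h satisfying ‖Rf♯ − r + Rh‖ ≤ ε and ‖Sf♯ − s + Sh‖ ≤ η. -/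
open scoped RealInnerProductSpace

/-- S-procedure argument: under the multiplier conditions, `h♯` maximizes the norm
over admissible perturbations. -/
theorem stmt_8
    {H H₁ H₂ : Type*}
    [NormedAddCommGroup H] [InnerProductSpace ℝ H] [CompleteSpace H]
    [NormedAddCommGroup H₁] [InnerProductSpace ℝ H₁] [CompleteSpace H₁]
    [NormedAddCommGroup H₂] [InnerProductSpace ℝ H₂] [CompleteSpace H₂]
    (R : H →L[ℝ] H₁) (S : H →L[ℝ] H₂) (r : H₁) (s : H₂)
    (ε η : ℝ) (hε : 0 < ε) (hη : 0 < η) (fs hs : H)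
    (hnorm₁ : ‖R fs - r + R hs‖ ^ 2 = ε ^ 2)
    (hnorm₂ : ‖S fs - s + S hs‖ ^ 2 = η ^ 2)
    (a b : ℝ) (ha : 0 ≤ a) (hb : 0 ≤ b)
    (hPSD : ∀ f : H,
      ‖f‖ ^ 2 ≤ ⟪(a • (ContinuousLinearMap.adjoint R ∘L R)
          + b • (ContinuousLinearMap.adjoint S ∘L S)) f, f⟫)
    (heq : a • ContinuousLinearMap.adjoint R (R fs - r)
        + b • ContinuousLinearMap.adjoint S (S fs - s)
        + (a • (ContinuousLinearMap.adjoint R ∘L R)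
            + b • (ContinuousLinearMap.adjoint S ∘L S)) hs = hs) :
    ∀ h : H, ‖R fs - r + R h‖ ≤ ε → ‖S fs - s + S h‖ ≤ η → ‖h‖ ≤ ‖hs‖ := by
  intro h hR hS
  set g := h - hs with hg
  have hRmap : R fs - r + R hs + R g = R fs - r + R h := by
    simp only [hg, map_sub]; abel
  have hSmap : S fs - s + S hs + S g = S fs - s + S h := by
    simp only [hg, map_sub]; abel
  have hRle : 2 * ⟪R fs - r + R hs, R g⟫ + ‖R g‖ ^ 2 ≤ 0 := by
    have h1 : ‖R fs - r + R hs + R g‖ ^ 2 ≤ ε ^ 2 := by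
      rw [hRmap]
      nlinarith [norm_nonneg (R fs - r + R h)]
    nlinarith [norm_add_sq_real (R fs - r + R hs) (R g)]
  have hSle : 2 * ⟪S fs - s + S hs, S g⟫ + ‖S g‖ ^ 2 ≤ 0 := by
    have h1 : ‖S fs - s + S hs + S g‖ ^ 2 ≤ η ^ 2 := by
      rw [hSmap]
      nlinarith [norm_nonneg (S fs - s + S h)]
    nlinarith [norm_add_sq_real (S fs - s + S hs) (S g)]
  have hinner : ⟪hs, g⟫ = a * ⟪R fs - r + R hs, R g⟫ + b * ⟪S fs - s + S hs, S g⟫ := by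
    conv_lhs => rw [← heq]
    simp only [ContinuousLinearMap.add_apply, ContinuousLinearMap.smul_apply,
      ContinuousLinearMap.comp_apply, inner_add_left, inner_smul_left,
      ContinuousLinearMap.adjoint_inner_left, RCLike.ofReal_real_eq_id, id_eq,
      conj_trivial]
    ring
  have hPSDg : ‖g‖ ^ 2 ≤ a * ‖R g‖ ^ 2 + b * ‖S g‖ ^ 2 := by
    have := hPSD g
    simp only [ContinuousLinearMap.add_apply, ContinuousLinearMap.smul_apply,
      ContinuousLinearMap.comp_apply, inner_add_left, inner_smul_left,
      ContinuousLinearMap.adjoint_inner_left, conj_trivial,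
      real_inner_self_eq_norm_sq] at this
    linarith
  have key : 2 * ⟪hs, g⟫ + ‖g‖ ^ 2 ≤ 0 := by
    nlinarith [mul_nonneg ha (sq_nonneg ‖R g‖), mul_nonneg hb (sq_nonneg ‖S g‖)]
  have hfin : ‖h‖ ^ 2 ≤ ‖hs‖ ^ 2 := by
    have : h = hs + g := by simp [hg]
    rw [this, norm_add_sq_real]
    linarith
  have := norm_nonneg h
  nlinarith [norm_nonneg hs]
end

section
/- Let R and S be orthogonal projections on a real Hilbert space H, let τ ∈ (0,1), and let h be an eigenvector of (1−τ)R + τS with eigenvalue λ ≠ 1/2. Then ‖Rh‖² = ((τ − λ)λ)/((1−τ)(1 − 2λ)) · ‖h‖² and ‖Sh‖² = ((1 − τ − λ)λ)/(τ(1 − 2λ)) · ‖h‖². -/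
open scoped RealInnerProductSpace

/-- Norms of the projections of an eigenvector of `(1-τ)R + τS`. -/
theorem stmt_9
    {H : Type*} [NormedAddCommGroup H] [InnerProductSpace ℝ H] [CompleteSpace H]
    (R S : H →L[ℝ] H)
    (hR : IsSelfAdjoint R) (hRi : R ∘L R = R)
    (hS : IsSelfAdjoint S) (hSi : S ∘L S = S)
    (τ : ℝ) (hτ : τ ∈ Set.Ioo (0 : ℝ) 1)
    (h : H) (hh0 : h ≠ 0) (lam : ℝ) (hlam : lam ≠ 1 / 2)
    (heig : ((1 - τ) • R + τ • S) h = lam • h) :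
    ‖R h‖ ^ 2 = ((τ - lam) * lam) / ((1 - τ) * (1 - 2 * lam)) * ‖h‖ ^ 2 ∧
    ‖S h‖ ^ 2 = ((1 - τ - lam) * lam) / (τ * (1 - 2 * lam)) * ‖h‖ ^ 2 := by
  obtain ⟨hτ0, hτ1⟩ := hτ
  have hτ0' : τ ≠ 0 := ne_of_gt hτ0
  have hτ1' : (1 : ℝ) - τ ≠ 0 := sub_ne_zero.mpr (by linarith)
  have h2lam : (1 : ℝ) - 2 * lam ≠ 0 := by
    intro hc; apply hlam; linarith
  have hsymR : ∀ x y : H, ⟪R x, y⟫ = ⟪x, R y⟫ := fun x y =>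
    (hR.isSymmetric) x y
  have hsymS : ∀ x y : H, ⟪S x, y⟫ = ⟪x, S y⟫ := fun x y =>
    (hS.isSymmetric) x y
  have hRR : R (R h) = R h := by
    have := congrArg (fun T : H →L[ℝ] H => T h) hRi
    simpa using this
  have hSS : S (S h) = S h := by
    have := congrArg (fun T : H →L[ℝ] H => T h) hSi
    simpa using this
  set a := ‖R h‖ ^ 2 with ha
  set b := ‖S h‖ ^ 2 with hb
  set n := ‖h‖ ^ 2 with hn
  set c := ⟪S h, R h⟫ with hc
  have haRh : ⟪R h, h⟫ = a := by
    calc ⟪R h, h⟫ = ⟪R (R h), h⟫ := by rw [hRR]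
      _ = ⟪R h, R h⟫ := hsymR _ _
      _ = a := by rw [real_inner_self_eq_norm_sq]
  have hbSh : ⟪S h, h⟫ = b := by
    calc ⟪S h, h⟫ = ⟪S (S h), h⟫ := by rw [hSS]
      _ = ⟪S h, S h⟫ := hsymS _ _
      _ = b := by rw [real_inner_self_eq_norm_sq]
  have heig' : (1 - τ) • R h + τ • S h = lam • h := by
    have := heig
    simpa [ContinuousLinearMap.add_apply, ContinuousLinearMap.smul_apply] using this
  have e1 : (1 - τ) * a + τ * b = lam * n := by
    have := congrArg (fun x => ⟪x, h⟫) heig'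
    simpa [inner_add_left, real_inner_smul_left, haRh, hbSh, real_inner_self_eq_norm_sq]
      using this
  have eR : (1 - τ) * a + τ * c = lam * a := by
    have := congrArg (fun x => ⟪x, R h⟫) heig'
    have hhRh : ⟪h, R h⟫ = a := by rw [real_inner_comm]; exact haRh
    have hRhRh : ⟪R h, R h⟫ = a := by rw [real_inner_self_eq_norm_sq]
    simpa [inner_add_left, real_inner_smul_left, hhRh, hRhRh] using this
  have eS : (1 - τ) * c + τ * b = lam * b := by
    have := congrArg (fun x => ⟪x, S h⟫) heig'
    have hhSh : ⟪h, S h⟫ = b := by rw [real_inner_comm]; exact hbSh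
    have hShSh : ⟪S h, S h⟫ = b := by rw [real_inner_self_eq_norm_sq]
    have hRhSh : ⟪R h, S h⟫ = c := by rw [real_inner_comm]
    simp only [inner_add_left, real_inner_smul_left, hRhSh, hShSh, hhSh] at this
    exact this
  constructor
  · rw [div_mul_eq_mul_div, eq_div_iff (mul_ne_zero hτ1' h2lam)]
    linear_combination (1 - τ) * eR - τ * eS + (τ - lam) * e1
  · rw [div_mul_eq_mul_div, eq_div_iff (mul_ne_zero hτ0' h2lam)]
    linear_combination (-(1 - τ)) * eR + τ * eS + (1 - τ - lam) * e1
end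

section
/- Let R and S be orthogonal projections on a real Hilbert space H with ker(R) ∩ ker(S) = {0}, r ∈ ran(R), s ∈ ran(S), with f₀ = argmin{‖Sf − s‖ : Rf = r}, f₁ = argmin{‖Rf − r‖ : Sf = s}, and δ := ‖f₁ − f₀‖. For τ ∈ (0,1)\{1/2} strictly between 1/2 and ε/(ε+η) (for given ε, η > 0 with ε ≠ η), the quantity (1−τ)ε² − τη² + (1−τ)τ(1−2τ)δ² is nonzero, provided (1−τ)τδ² ≤ (1−τ)ε² + τη². -/
/-! The claim is an identity plus a sign count. With `A = (1-τ)ε - τη`, `B = (1-τ)ε + τη` and the slack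
`s = (1-τ)ε² + τη² - (1-τ)τδ² ≥ 0`, the quantity equals `2AB - (1-2τ)s`. The numbers
`A = (ε+η)(ε/(ε+η) - τ)` and `1-2τ = 2(1/2 - τ)` have opposite signs exactly when `τ` lies strictly
between `1/2` and `ε/(ε+η)`, so both summands push the same way and the quantity has the sign
of `A ≠ 0`. -/

lemma sub_mul_sub_neg_of_min_lt_of_lt_max {α : Type*} [Ring α] [LinearOrder α] [IsStrictOrderedRing α]
    {a b x : α} (hlo : min a b < x) (hhi : x < max a b) : (a - x) * (b - x) < 0 := by
  rcases le_total a b with hab | hab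
  · rw [min_eq_left hab] at hlo
    rw [max_eq_right hab] at hhi
    exact mul_neg_of_neg_of_pos (sub_neg.2 hlo) (sub_pos.2 hhi)
  · rw [min_eq_right hab] at hlo
    rw [max_eq_left hab] at hhi
    exact mul_neg_of_pos_of_neg (sub_pos.2 hhi) (sub_neg.2 hlo)

lemma mul_sub_mul_ne_zero_of_mul_neg {α : Type*} [Ring α] [LinearOrder α] [IsStrictOrderedRing α]
    {a b c s : α} (hac : a * c < 0) (hb : 0 < b) (hs : 0 ≤ s) : a * b - c * s ≠ 0 := by
  have ha : a ≠ 0 := by rintro rfl; simp at hac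
  have hpos : 0 < a * (a * b - c * s) := by
    have : a * (a * b - c * s) = a * a * b + -(a * c) * s := by noncomm_ring
    rw [this]
    exact add_pos_of_pos_of_nonneg (mul_pos (mul_self_pos.2 ha) hb)
      (mul_nonneg (neg_nonneg.2 hac.le) hs)
  exact right_ne_zero_of_mul hpos.ne'

theorem stmt_11_general
    (δ : ℝ)
    (ε η : ℝ) (hε : 0 < ε) (hη : 0 < η)
    (τ : ℝ) (hτ0 : 0 < τ) (hτ1 : τ < 1)
    (hτlo : min (1 / 2) (ε / (ε + η)) < τ) (hτhi : τ < max (1 / 2) (ε / (ε + η)))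
    (hbound : (1 - τ) * τ * δ ^ 2 ≤ (1 - τ) * ε ^ 2 + τ * η ^ 2) :
    (1 - τ) * ε ^ 2 - τ * η ^ 2 + (1 - τ) * τ * (1 - 2 * τ) * δ ^ 2 ≠ 0 := by
  have hεη_ne : ε + η ≠ 0 := (add_pos hε hη).ne'
  have hsign : ((1 - τ) * ε - τ * η) * (1 - 2 * τ) < 0 := by
    have hprod : ((1 - τ) * ε - τ * η) * (1 - 2 * τ)
        = 2 * (ε + η) * ((1 / 2 - τ) * (ε / (ε + η) - τ)) := by
      field_simp
      ring
    rw [hprod]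
    exact mul_neg_of_pos_of_neg (by positivity) (sub_mul_sub_neg_of_min_lt_of_lt_max hτlo hτhi)
  have hslack : 0 ≤ (1 - τ) * ε ^ 2 + τ * η ^ 2 - (1 - τ) * τ * δ ^ 2 := sub_nonneg.2 hbound
  have hB : 0 < 2 * ((1 - τ) * ε + τ * η) := by
    have : 0 < 1 - τ := sub_pos.2 hτ1
    positivity
  have key := mul_sub_mul_ne_zero_of_mul_neg hsign hB hslack
  convert key using 1
  ring

/-- For `τ` strictly between `1/2` and `ε/(ε+η)`, the denominator
`(1-τ)ε² - τη² + (1-τ)τ(1-2τ)δ²` does not vanish, where `δ = ‖f₁ - f₀‖`. -/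
theorem stmt_11
    {H : Type*} [NormedAddCommGroup H] [InnerProductSpace ℝ H] [CompleteSpace H]
    (R S : H →L[ℝ] H)
    (hR : IsSelfAdjoint R) (hRi : R ∘L R = R)
    (hS : IsSelfAdjoint S) (hSi : S ∘L S = S)
    (hker : LinearMap.ker (R : H →ₗ[ℝ] H) ⊓ LinearMap.ker (S : H →ₗ[ℝ] H) = ⊥)
    (r s : H) (hr : r ∈ LinearMap.range (R : H →ₗ[ℝ] H)) (hs : s ∈ LinearMap.range (S : H →ₗ[ℝ] H))
    (f₀ f₁ : H)
    (hf₀ : R f₀ = r ∧ IsMinOn (fun f : H => ‖S f - s‖) {f : H | R f = r} f₀)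
    (hf₁ : S f₁ = s ∧ IsMinOn (fun f : H => ‖R f - r‖) {f : H | S f = s} f₁)
    (δ : ℝ) (hδ : δ = ‖f₁ - f₀‖)
    (ε η : ℝ) (hε : 0 < ε) (hη : 0 < η) (hεη : ε ≠ η)
    (τ : ℝ) (hτ0 : 0 < τ) (hτ1 : τ < 1)
    (hτlo : min (1 / 2) (ε / (ε + η)) < τ) (hτhi : τ < max (1 / 2) (ε / (ε + η)))
    (hbound : (1 - τ) * τ * δ ^ 2 ≤ (1 - τ) * ε ^ 2 + τ * η ^ 2) :
    (1 - τ) * ε ^ 2 - τ * η ^ 2 + (1 - τ) * τ * (1 - 2 * τ) * δ ^ 2 ≠ 0 :=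
  stmt_11_general δ ε η hε hη τ hτ0 hτ1 hτlo hτhi hbound
end

section
/- Let H be a finite-dimensional real inner product space, V a subspace with V ∩ ker(Λ) = {0}, Λ : H → ℝ^m linear, and ε, η > 0. Then (sup{‖h‖ : ‖P_{V⊥}h‖ ≤ ε, ‖Λh‖ ≤ η})² equals the minimum of cε² + dη² over all c, d ≥ 0 such that c P_{V⊥} + d Λ*Λ ⪰ Id. -/
/-!
Rescale so that the constraints read `b h ≤ 1`, `c h ≤ 1` with `b = ‖ε⁻¹ B ·‖²`, `c = ‖η⁻¹ C ·‖²`;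
weak duality is then immediate. For strong duality let `μ t` be the minimum of `t b + (1 - t) c`
on the unit sphere, an upper semicontinuous function, and let `t` maximise it on `[0, 1]`.
A one-sided (Danskin) argument produces minimisers at `t` with `b ≤ c` (if `t < 1`) and with
`b ≥ c` (if `0 < t`). The zeros of the nonnegative quadratic form `t b + (1 - t) c - μ t ‖·‖²`
form a subspace, so the intermediate value theorem on the segment between two such minimisers
gives a unit `h` with `b h = c h = μ t`. Then `h / √(μ t)` is primal optimal and
`(t, 1 - t) / μ t` dual optimal, both with value `1 / μ t`.
-/

open scoped RealInnerProductSpace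
open Set Filter Topology Metric

section DualCertificate

variable {E F₁ F₂ : Type*} [NormedAddCommGroup E] [NormedAddCommGroup F₁] [NormedAddCommGroup F₂]

lemma sq_sSup_norm_eq_sInf_of_certificate (B : E → F₁) (C : E → F₂) {ε η c₀ d₀ : ℝ} {h₀ : E}
    (hc₀ : 0 ≤ c₀) (hd₀ : 0 ≤ d₀) (hBh₀ : ‖B h₀‖ ≤ ε) (hCh₀ : ‖C h₀‖ ≤ η)
    (hcert : ∀ f, ‖f‖ ^ 2 ≤ c₀ * ‖B f‖ ^ 2 + d₀ * ‖C f‖ ^ 2)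
    (hval : ‖h₀‖ ^ 2 = c₀ * ε ^ 2 + d₀ * η ^ 2) :
    (sSup {t : ℝ | ∃ h : E, ‖B h‖ ≤ ε ∧ ‖C h‖ ≤ η ∧ t = ‖h‖}) ^ 2
      = sInf {v : ℝ | ∃ c d : ℝ, 0 ≤ c ∧ 0 ≤ d ∧
          (∀ f : E, ‖f‖ ^ 2 ≤ c * ‖B f‖ ^ 2 + d * ‖C f‖ ^ 2) ∧ v = c * ε ^ 2 + d * η ^ 2} := by
  have hsup : IsGreatest {t : ℝ | ∃ h : E, ‖B h‖ ≤ ε ∧ ‖C h‖ ≤ η ∧ t = ‖h‖} ‖h₀‖ := by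
    refine ⟨⟨h₀, hBh₀, hCh₀, rfl⟩, ?_⟩
    rintro _ ⟨x, hBx, hCx, rfl⟩
    have hB := pow_le_pow_left₀ (norm_nonneg _) hBx 2
    have hC := pow_le_pow_left₀ (norm_nonneg _) hCx 2
    refine (pow_le_pow_iff_left₀ (norm_nonneg x) (norm_nonneg h₀) two_ne_zero).mp ?_
    nlinarith [hcert x]
  have hinf : IsLeast {v : ℝ | ∃ c d : ℝ, 0 ≤ c ∧ 0 ≤ d ∧
      (∀ f : E, ‖f‖ ^ 2 ≤ c * ‖B f‖ ^ 2 + d * ‖C f‖ ^ 2) ∧ v = c * ε ^ 2 + d * η ^ 2}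
      (‖h₀‖ ^ 2) := by
    refine ⟨⟨c₀, d₀, hc₀, hd₀, hcert, hval⟩, ?_⟩
    rintro _ ⟨c, d, hc, hd, hcd, rfl⟩
    have hB := pow_le_pow_left₀ (norm_nonneg _) hBh₀ 2
    have hC := pow_le_pow_left₀ (norm_nonneg _) hCh₀ 2
    nlinarith [hcd h₀]
  rw [hsup.csSup_eq, hinf.csInf_eq]

end DualCertificate

section WeightedNormSq

variable {E F₁ F₂ : Type*} [NormedAddCommGroup E] [InnerProductSpace ℝ E]
  [NormedAddCommGroup F₁] [InnerProductSpace ℝ F₁] [NormedAddCommGroup F₂] [InnerProductSpace ℝ F₂]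
  (B : E →L[ℝ] F₁) (C : E →L[ℝ] F₂)

def weightedNormSq (t : ℝ) (x : E) : ℝ := t * ‖B x‖ ^ 2 + (1 - t) * ‖C x‖ ^ 2

@[fun_prop]
lemma continuous_weightedNormSq_uncurry :
    Continuous fun p : ℝ × E => weightedNormSq B C p.1 p.2 := by
  unfold weightedNormSq; fun_prop

lemma weightedNormSq_swap (t : ℝ) (x : E) :
    weightedNormSq C B (1 - t) x = weightedNormSq B C t x := by
  unfold weightedNormSq; ring

lemma weightedNormSq_smul (t a : ℝ) (x : E) :
    weightedNormSq B C t (a • x) = a ^ 2 * weightedNormSq B C t x := by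
  simp only [weightedNormSq, map_smul, norm_smul, Real.norm_eq_abs, mul_pow, sq_abs]; ring

lemma weightedNormSq_neg (t : ℝ) (x : E) :
    weightedNormSq B C t (-x) = weightedNormSq B C t x := by
  simp [weightedNormSq]

lemma weightedNormSq_eq_add (s t : ℝ) (x : E) :
    weightedNormSq B C s x = weightedNormSq B C t x + (s - t) * (‖B x‖ ^ 2 - ‖C x‖ ^ 2) := by
  unfold weightedNormSq; ring

lemma weightedNormSq_eq_norm_sq_of_eq {t : ℝ} {x : E} (h : ‖B x‖ ^ 2 = ‖C x‖ ^ 2) :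
    weightedNormSq B C t x = ‖B x‖ ^ 2 := by
  rw [weightedNormSq, ← h]; ring

-- Testing the inequality at `x ± y` kills the cross term of the form.
lemma weightedNormSq_add_eq_of_forall_le {t μ : ℝ}
    (hle : ∀ x, μ * ‖x‖ ^ 2 ≤ weightedNormSq B C t x) {x y : E}
    (hx : weightedNormSq B C t x = μ * ‖x‖ ^ 2) (hy : weightedNormSq B C t y = μ * ‖y‖ ^ 2) :
    weightedNormSq B C t (x + y) = μ * ‖x + y‖ ^ 2 := by
  have hadd := hle (x + y)
  have hsub := hle (x - y)
  simp only [weightedNormSq, map_add, map_sub, norm_add_sq_real, norm_sub_sq_real] at *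
  nlinarith

lemma exists_norm_sq_eq_of_opposite_minimizers {t μ : ℝ}
    (hle : ∀ x, μ * ‖x‖ ^ 2 ≤ weightedNormSq B C t x) {h₁ h₂ : E} (hh₁ : ‖h₁‖ = 1) (hh₂ : ‖h₂‖ = 1)
    (hg₁ : weightedNormSq B C t h₁ = μ) (hg₂ : weightedNormSq B C t h₂ = μ)
    (hBC₁ : ‖C h₁‖ ^ 2 ≤ ‖B h₁‖ ^ 2) (hBC₂ : ‖B h₂‖ ^ 2 ≤ ‖C h₂‖ ^ 2) :
    ∃ h : E, ‖h‖ = 1 ∧ ‖B h‖ ^ 2 = μ ∧ ‖C h‖ ^ 2 = μ := by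
  wlog hinner : 0 ≤ ⟪h₁, h₂⟫ generalizing h₂
  · exact this (h₂ := -h₂) (by simpa) (by rwa [weightedNormSq_neg]) (by simpa using hBC₂)
      (by rw [inner_neg_right]; linarith)
  let p : ℝ → E := fun θ => (1 - θ) • h₁ + θ • h₂
  obtain ⟨θ, ⟨hθ₀, hθ₁⟩, hθ : ‖B (p θ)‖ ^ 2 - ‖C (p θ)‖ ^ 2 = 0⟩ :=
    intermediate_value_Icc' zero_le_one
      (by fun_prop : ContinuousOn (fun θ => ‖B (p θ)‖ ^ 2 - ‖C (p θ)‖ ^ 2) (Icc 0 1))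
      (show (0 : ℝ) ∈ Icc _ _ from ⟨by simp [p]; linarith, by simp [p]; linarith⟩)
  -- the segment from `h₁` to `h₂` avoids the origin because `⟪h₁, h₂⟫ ≥ 0`
  have hp : p θ ≠ 0 := by
    have : 0 < ‖p θ‖ ^ 2 := by
      simp only [p, norm_add_sq_real, norm_smul, real_inner_smul_left, real_inner_smul_right,
        Real.norm_eq_abs, mul_pow, sq_abs, hh₁, hh₂]
      nlinarith [mul_nonneg (mul_nonneg hθ₀ (sub_nonneg.2 hθ₁)) hinner]
    exact fun h0 => by simp [h0] at this
  have hpg : weightedNormSq B C t (p θ) = μ * ‖p θ‖ ^ 2 := by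
    apply weightedNormSq_add_eq_of_forall_le B C hle <;>
      simp [weightedNormSq_smul, norm_smul, hg₁, hg₂, hh₁, hh₂, mul_comm]
  set y := ‖p θ‖⁻¹ • p θ
  have hBC : ‖B y‖ ^ 2 = ‖C y‖ ^ 2 := by
    simp only [y, map_smul, norm_smul, mul_pow]
    rw [sub_eq_zero.mp hθ]
  have hy : weightedNormSq B C t y = μ := by
    rw [weightedNormSq_smul, hpg]
    field_simp
  refine ⟨y, norm_smul_inv_norm hp, ?_, ?_⟩
  · rw [← weightedNormSq_eq_norm_sq_of_eq B C hBC, hy]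
  · rw [← hBC, ← weightedNormSq_eq_norm_sq_of_eq B C hBC, hy]

noncomputable def weightedNormSqInf (t : ℝ) : ℝ := ⨅ x : sphere (0 : E) 1, weightedNormSq B C t x

lemma weightedNormSqInf_swap (t : ℝ) :
    weightedNormSqInf C B (1 - t) = weightedNormSqInf B C t := by
  simp only [weightedNormSqInf, weightedNormSq_swap]

variable [FiniteDimensional ℝ E]

lemma bddBelow_range_weightedNormSq (t : ℝ) :
    BddBelow (range fun x : sphere (0 : E) 1 => weightedNormSq B C t x) :=
  (isCompact_range (by fun_prop)).bddBelow

lemma weightedNormSqInf_le (t : ℝ) {x : E} (hx : ‖x‖ = 1) :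
    weightedNormSqInf B C t ≤ weightedNormSq B C t x :=
  ciInf_le (bddBelow_range_weightedNormSq B C t) (⟨x, by simpa using hx⟩ : sphere (0 : E) 1)

lemma exists_weightedNormSq_eq_weightedNormSqInf [Nontrivial E] (t : ℝ) :
    ∃ x : E, ‖x‖ = 1 ∧ weightedNormSq B C t x = weightedNormSqInf B C t := by
  have : Nonempty (sphere (0 : E) 1) := (NormedSpace.sphere_nonempty.mpr zero_le_one).to_subtype
  obtain ⟨x, -, hx⟩ := (isCompact_univ (X := sphere (0 : E) 1)).exists_isMinOn univ_nonempty
    (by fun_prop : Continuous fun x : sphere (0 : E) 1 => weightedNormSq B C t x).continuousOn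
  exact ⟨x, by simp, le_antisymm (le_ciInf fun y => hx (mem_univ y))
    (weightedNormSqInf_le B C t (by simp))⟩

lemma weightedNormSqInf_mul_norm_sq_le (t : ℝ) (x : E) :
    weightedNormSqInf B C t * ‖x‖ ^ 2 ≤ weightedNormSq B C t x := by
  rcases eq_or_ne x 0 with rfl | hx
  · simp [weightedNormSq]
  have hnorm : ‖x‖ ≠ 0 := norm_ne_zero_iff.mpr hx
  have := weightedNormSqInf_le B C t (x := ‖x‖⁻¹ • x) (by simp [norm_smul, hnorm])
  rw [weightedNormSq_smul, inv_pow, inv_mul_eq_div, le_div_iff₀ (by positivity)] at this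
  exact this

lemma upperSemicontinuous_weightedNormSqInf :
    UpperSemicontinuous (weightedNormSqInf B C : ℝ → ℝ) :=
  upperSemicontinuous_ciInf (bddBelow_range_weightedNormSq B C)
    fun x => (by unfold weightedNormSq; fun_prop : Continuous fun t => weightedNormSq B C t x)
      |>.upperSemicontinuous

lemma exists_weightedNormSq_eq_and_le_of_isMaxFilter_nhdsGT [Nontrivial E] {t : ℝ}
    (hmax : IsMaxFilter (weightedNormSqInf B C) (𝓝[>] t) t) :
    ∃ x : E, ‖x‖ = 1 ∧ weightedNormSq B C t x = weightedNormSqInf B C t ∧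
      ‖B x‖ ^ 2 ≤ ‖C x‖ ^ 2 := by
  choose x hx₁ hx using exists_weightedNormSq_eq_weightedNormSqInf B C
  let s : ℕ → ℝ := fun n => t + 1 / (n + 1)
  have hs : Tendsto s atTop (𝓝[>] t) := by
    refine tendsto_nhdsWithin_iff.mpr ⟨?_, Eventually.of_forall fun n => ?_⟩
    · simpa [s] using (tendsto_const_nhds (x := t)).add tendsto_one_div_add_atTop_nhds_zero_nat
    · simp only [s, mem_Ioi, lt_add_iff_pos_right]; positivity
  have hev : ∀ᶠ n in atTop, weightedNormSq B C (s n) (x (s n)) ≤ weightedNormSqInf B C t ∧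
      ‖B (x (s n))‖ ^ 2 ≤ ‖C (x (s n))‖ ^ 2 := by
    filter_upwards [hs.eventually hmax, hs.eventually self_mem_nhdsWithin] with n hn hsn
    rw [hx]
    refine ⟨hn, ?_⟩
    -- at `x (s n)` the form is `≥ μ t` for the weight `t` but `≤ μ t` for the larger weight `s n`
    have hmin := weightedNormSqInf_le B C t (hx₁ (s n))
    have := weightedNormSq_eq_add B C (s n) t (x (s n))
    rw [hx] at this
    nlinarith [show t < s n from hsn]
  obtain ⟨y, hy, φ, hφ, hlim⟩ := (isCompact_sphere (0 : E) 1).tendsto_subseq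
    (x := fun n => x (s n)) fun n => by simp [hx₁]
  have hev' := hφ.tendsto_atTop.eventually hev
  refine ⟨y, by simpa using hy, le_antisymm ?_ (weightedNormSqInf_le B C t (by simpa using hy)), ?_⟩
  · have hpair := ((tendsto_nhdsWithin_iff.mp hs).1.comp hφ.tendsto_atTop).prodMk_nhds hlim
    exact le_of_tendsto ((continuous_weightedNormSq_uncurry B C).tendsto (t, y) |>.comp hpair)
      (hev'.mono fun n hn => hn.1)
  · exact le_of_tendsto_of_tendsto
      ((by fun_prop : Continuous fun z : E => ‖B z‖ ^ 2).tendsto y |>.comp hlim)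
      ((by fun_prop : Continuous fun z : E => ‖C z‖ ^ 2).tendsto y |>.comp hlim)
      (hev'.mono fun n hn => hn.2)

lemma exists_weightedNormSq_eq_and_le_of_isMaxFilter_nhdsLT [Nontrivial E] {t : ℝ}
    (hmax : IsMaxFilter (weightedNormSqInf B C) (𝓝[<] t) t) :
    ∃ x : E, ‖x‖ = 1 ∧ weightedNormSq B C t x = weightedNormSqInf B C t ∧
      ‖C x‖ ^ 2 ≤ ‖B x‖ ^ 2 := by
  have hswap : IsMaxFilter (weightedNormSqInf C B) (𝓝[>] (1 - t)) (1 - t) := by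
    obtain ⟨l, hl, hsub⟩ := mem_nhdsLT_iff_exists_Ioo_subset.mp hmax
    filter_upwards [Ioo_mem_nhdsGT (show 1 - t < 1 - l by linarith [hl.out])] with s hs
    have : weightedNormSqInf B C (1 - s) ≤ weightedNormSqInf B C t :=
      hsub ⟨by linarith [hs.2], by linarith [hs.1]⟩
    rwa [← weightedNormSqInf_swap B C t, ← weightedNormSqInf_swap B C (1 - s), sub_sub_cancel]
      at this
  simpa only [weightedNormSq_swap, weightedNormSqInf_swap] using
    exists_weightedNormSq_eq_and_le_of_isMaxFilter_nhdsGT C B hswap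

theorem exists_forall_mul_norm_sq_le_weightedNormSq [Nontrivial E] :
    ∃ t ∈ Icc (0 : ℝ) 1, ∃ μ : ℝ, ∃ h : E, ‖h‖ = 1 ∧ ‖B h‖ ^ 2 ≤ μ ∧ ‖C h‖ ^ 2 ≤ μ ∧
      ∀ x, μ * ‖x‖ ^ 2 ≤ weightedNormSq B C t x := by
  obtain ⟨t, ⟨ht₀, ht₁⟩, hmax⟩ := UpperSemicontinuousOn.exists_isMaxOn (nonempty_Icc.2 zero_le_one)
    isCompact_Icc ((upperSemicontinuous_weightedNormSqInf B C).upperSemicontinuousOn _)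
  have hle := weightedNormSqInf_mul_norm_sq_le B C t
  suffices ∃ h : E, ‖h‖ = 1 ∧ ‖B h‖ ^ 2 ≤ weightedNormSqInf B C t ∧
      ‖C h‖ ^ 2 ≤ weightedNormSqInf B C t by
    obtain ⟨h, hh, hB, hC⟩ := this
    exact ⟨t, ⟨ht₀, ht₁⟩, _, h, hh, hB, hC, hle⟩
  rcases ht₁.lt_or_eq with ht₁ | rfl
  · obtain ⟨h₂, hh₂, hg₂, hBC₂⟩ := exists_weightedNormSq_eq_and_le_of_isMaxFilter_nhdsGT B C <|
      Filter.mem_of_superset (Ioo_mem_nhdsGT ht₁) fun s hs => hmax ⟨by linarith [hs.1], hs.2.le⟩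
    rcases ht₀.lt_or_eq with ht₀ | rfl
    · obtain ⟨h₁, hh₁, hg₁, hBC₁⟩ := exists_weightedNormSq_eq_and_le_of_isMaxFilter_nhdsLT B C <|
        Filter.mem_of_superset (Ioo_mem_nhdsLT ht₀) fun s hs => hmax ⟨hs.1.le, by linarith [hs.2]⟩
      obtain ⟨h, hh, hB, hC⟩ :=
        exists_norm_sq_eq_of_opposite_minimizers B C hle hh₁ hh₂ hg₁ hg₂ hBC₁ hBC₂
      exact ⟨h, hh, hB.le, hC.le⟩
    · simp only [weightedNormSq, zero_mul, sub_zero, one_mul, zero_add] at hg₂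
      exact ⟨h₂, hh₂, hg₂ ▸ hBC₂, hg₂.le⟩
  · obtain ⟨h₁, hh₁, hg₁, hBC₁⟩ := exists_weightedNormSq_eq_and_le_of_isMaxFilter_nhdsLT B C <|
      Filter.mem_of_superset (Ioo_mem_nhdsLT zero_lt_one) fun s hs => hmax ⟨hs.1.le, hs.2.le⟩
    simp only [weightedNormSq, one_mul, sub_self, zero_mul, add_zero] at hg₁
    exact ⟨h₁, hh₁, hg₁.le, hg₁ ▸ hBC₁⟩

theorem exists_dual_certificate (hker : ∀ x, B x = 0 → C x = 0 → x = 0) {ε η : ℝ}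
    (hε : 0 < ε) (hη : 0 < η) :
    ∃ c₀ d₀ : ℝ, ∃ h₀ : E, 0 ≤ c₀ ∧ 0 ≤ d₀ ∧ ‖B h₀‖ ≤ ε ∧ ‖C h₀‖ ≤ η ∧
      (∀ f, ‖f‖ ^ 2 ≤ c₀ * ‖B f‖ ^ 2 + d₀ * ‖C f‖ ^ 2) ∧ ‖h₀‖ ^ 2 = c₀ * ε ^ 2 + d₀ * η ^ 2 := by
  rcases subsingleton_or_nontrivial E with hE | hE
  · exact ⟨0, 0, 0, le_rfl, le_rfl, by simpa using hε.le, by simpa using hη.le,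
      fun f => by simp [Subsingleton.elim f 0], by simp⟩
  obtain ⟨t, ⟨ht₀, ht₁⟩, μ, h, hh, hBh, hCh, hle⟩ :=
    exists_forall_mul_norm_sq_le_weightedNormSq (ε⁻¹ • B) (η⁻¹ • C)
  simp only [weightedNormSq, smul_apply, norm_smul, norm_inv,
    Real.norm_of_nonneg hε.le, Real.norm_of_nonneg hη.le, mul_pow, inv_pow] at hBh hCh hle
  have hμ : 0 < μ := by
    by_contra! hμ
    have hB : B h = 0 := by simpa [hε.ne'] using (le_antisymm (hBh.trans hμ) (by positivity))
    have hC : C h = 0 := by simpa [hη.ne'] using (le_antisymm (hCh.trans hμ) (by positivity))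
    simp [hker h hB hC] at hh
  refine ⟨t / (μ * ε ^ 2), (1 - t) / (μ * η ^ 2), (√μ)⁻¹ • h, by positivity,
    div_nonneg (by linarith) (by positivity), ?_, ?_, fun f => ?_, ?_⟩
  · refine (pow_le_pow_iff_left₀ (norm_nonneg _) hε.le two_ne_zero).mp ?_
    rw [map_smul, norm_smul, mul_pow, norm_inv, Real.norm_of_nonneg (Real.sqrt_nonneg _), inv_pow,
      Real.sq_sqrt hμ.le, inv_mul_le_iff₀ hμ]
    rwa [inv_mul_le_iff₀ (by positivity), mul_comm] at hBh
  · refine (pow_le_pow_iff_left₀ (norm_nonneg _) hη.le two_ne_zero).mp ?_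
    rw [map_smul, norm_smul, mul_pow, norm_inv, Real.norm_of_nonneg (Real.sqrt_nonneg _), inv_pow,
      Real.sq_sqrt hμ.le, inv_mul_le_iff₀ hμ]
    rwa [inv_mul_le_iff₀ (by positivity), mul_comm] at hCh
  · calc ‖f‖ ^ 2 = μ⁻¹ * (μ * ‖f‖ ^ 2) := by field_simp
      _ ≤ μ⁻¹ * (t * ((ε ^ 2)⁻¹ * ‖B f‖ ^ 2) + (1 - t) * ((η ^ 2)⁻¹ * ‖C f‖ ^ 2)) := by
        gcongr; exact hle f
      _ = _ := by field_simp
  · rw [norm_smul, hh, mul_one, norm_inv, Real.norm_of_nonneg (Real.sqrt_nonneg _), inv_pow,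
      Real.sq_sqrt hμ.le]
    field_simp
    ring

theorem sq_sSup_norm_eq_sInf (hker : ∀ x, B x = 0 → C x = 0 → x = 0) {ε η : ℝ}
    (hε : 0 < ε) (hη : 0 < η) :
    (sSup {t : ℝ | ∃ h : E, ‖B h‖ ≤ ε ∧ ‖C h‖ ≤ η ∧ t = ‖h‖}) ^ 2
      = sInf {v : ℝ | ∃ c d : ℝ, 0 ≤ c ∧ 0 ≤ d ∧
          (∀ f : E, ‖f‖ ^ 2 ≤ c * ‖B f‖ ^ 2 + d * ‖C f‖ ^ 2) ∧ v = c * ε ^ 2 + d * η ^ 2} := by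
  obtain ⟨c₀, d₀, h₀, hc₀, hd₀, hBh₀, hCh₀, hcert, hval⟩ := exists_dual_certificate B C hker hε hη
  exact sq_sSup_norm_eq_sInf_of_certificate B C hc₀ hd₀ hBh₀ hCh₀ hcert hval

end WeightedNormSq

lemma inner_smul_starProjection_add_smul_adjoint_comp_self_apply_self {H F : Type*}
    [NormedAddCommGroup H] [InnerProductSpace ℝ H] [CompleteSpace H]
    [NormedAddCommGroup F] [InnerProductSpace ℝ F] [CompleteSpace F]
    (K : Submodule ℝ H) [K.HasOrthogonalProjection] (Λ : H →L[ℝ] F) (c d : ℝ) (f : H) :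
    ⟪(c • (K.subtypeL ∘L K.orthogonalProjectionOnto)
        + d • (ContinuousLinearMap.adjoint Λ ∘L Λ)) f, f⟫ =
      c * ‖K.orthogonalProjectionOnto f‖ ^ 2 + d * ‖Λ f‖ ^ 2 := by
  rw [add_apply, smul_apply, smul_apply, inner_add_left, real_inner_smul_left,
    real_inner_smul_left]
  change c * ⟪K.starProjection f, f⟫ + d * ⟪ContinuousLinearMap.adjoint Λ (Λ f), f⟫ = _
  rw [← K.re_inner_starProjection_eq_normSq, ContinuousLinearMap.adjoint_inner_left,
    real_inner_self_eq_norm_sq]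
  rfl

theorem stmt_13_general
    {H : Type*} [NormedAddCommGroup H] [InnerProductSpace ℝ H] [FiniteDimensional ℝ H]
    {m : ℕ} (V : Submodule ℝ H) (Λ : H →L[ℝ] EuclideanSpace ℝ (Fin m))
    (hVker : V ⊓ LinearMap.ker (Λ : H →ₗ[ℝ] EuclideanSpace ℝ (Fin m)) = ⊥)
    (ε η : ℝ) (hε : 0 < ε) (hη : 0 < η) :
    (sSup {t : ℝ | ∃ h : H,
        ‖(Submodule.orthogonalProjectionOnto Vᗮ h : H)‖ ≤ ε ∧ ‖Λ h‖ ≤ η ∧ t = ‖h‖}) ^ 2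
      = sInf {v : ℝ | ∃ c d : ℝ, 0 ≤ c ∧ 0 ≤ d ∧
          (∀ f : H, ‖f‖ ^ 2 ≤
            ⟪(c • (Vᗮ.subtypeL ∘L Submodule.orthogonalProjectionOnto Vᗮ)
              + d • (ContinuousLinearMap.adjoint Λ ∘L Λ)) f, f⟫) ∧
          v = c * ε ^ 2 + d * η ^ 2} := by
  have hker : ∀ x, Vᗮ.orthogonalProjectionOnto x = 0 → Λ x = 0 → x = 0 := fun x hP hΛ => by
    have hx : x ∈ V ⊓ LinearMap.ker (Λ : H →ₗ[ℝ] EuclideanSpace ℝ (Fin m)) :=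
      ⟨by simpa using Submodule.orthogonalProjectionOnto_eq_zero_iff.mp hP, hΛ⟩
    simpa [hVker] using hx
  simp only [inner_smul_starProjection_add_smul_adjoint_comp_self_apply_self]
  exact sq_sSup_norm_eq_sInf _ Λ hker hε hη

/-- The squared lower bound equals the optimal value of the semidefinite program
`min cε² + dη²` subject to `c P_{V⊥} + d Λ*Λ ⪰ Id`, `c, d ≥ 0`. -/
theorem stmt_13
    {H : Type*} [NormedAddCommGroup H] [InnerProductSpace ℝ H] [FiniteDimensional ℝ H]
    (hdim : 3 ≤ Module.finrank ℝ H)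
    {m : ℕ} (V : Submodule ℝ H) (Λ : H →L[ℝ] EuclideanSpace ℝ (Fin m))
    (hVker : V ⊓ LinearMap.ker (Λ : H →ₗ[ℝ] EuclideanSpace ℝ (Fin m)) = ⊥)
    (ε η : ℝ) (hε : 0 < ε) (hη : 0 < η) :
    (sSup {t : ℝ | ∃ h : H,
        ‖(Submodule.orthogonalProjectionOnto Vᗮ h : H)‖ ≤ ε ∧ ‖Λ h‖ ≤ η ∧ t = ‖h‖}) ^ 2
      = sInf {v : ℝ | ∃ c d : ℝ, 0 ≤ c ∧ 0 ≤ d ∧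
          (∀ f : H, ‖f‖ ^ 2 ≤
            ⟪(c • (Vᗮ.subtypeL ∘L Submodule.orthogonalProjectionOnto Vᗮ)
              + d • (ContinuousLinearMap.adjoint Λ ∘L Λ)) f, f⟫) ∧
          v = c * ε ^ 2 + d * η ^ 2} :=
  stmt_13_general V Λ hVker ε η hε hη
end

section
/- Let H be a finite-dimensional real inner product space, V a subspace with V ∩ ker(Λ) = {0}, and Λ : H → ℝ^m linear. Suppose c, d ≥ 0 satisfy c P_{V⊥} + d Λ*Λ ⪰ Id, and set τ = d/(c+d) and Δ_τ = ((1−τ)P_{V⊥} + τΛ*Λ)⁻¹ (τΛ*). Then for all f ∈ H and e ∈ ℝ^m: ‖(Id − Δ_τΛ)f − Δ_τ e‖² ≤ c‖P_{V⊥}f‖² + d‖e‖². -/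
open scoped RealInnerProductSpace

/-
Write `P = P_{V⊥}`, `M = c P + d Λ*Λ` and `g = (Id - Δ_τ Λ) f - Δ_τ e`. Since `M = (c + d)((1-τ)P + τΛ*Λ)`,
the defining equation of `Δ_τ` gives `M g = c P f - d Λ* e`, so
`⟪M g, g⟫ = c ⟪P f, P g⟫ - d ⟪e, Λ g⟫` while also `⟪M g, g⟫ = c ‖P g‖² + d ‖Λ g‖²`. Combining the two,
`c ‖P f‖² + d ‖e‖² = ⟪M g, g⟫ + c ‖P f - P g‖² + d ‖e + Λ g‖² ≥ ⟪M g, g⟫ ≥ ‖g‖²`.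
-/

open ContinuousLinearMap

namespace Submodule

variable {E : Type*} [NormedAddCommGroup E] [InnerProductSpace ℝ E]
  (K : Submodule ℝ E) [K.HasOrthogonalProjection]

theorem real_inner_starProjection_left_eq_inner_starProjection (x y : E) :
    ⟪K.starProjection x, y⟫ = ⟪K.starProjection x, K.starProjection y⟫ := by
  rw [inner_starProjection_left_eq_right, inner_starProjection_left_eq_right K x,
    starProjection_eq_self_iff.mpr (K.starProjection_apply_mem y)]

end Submodule

section ProjectionGram

variable {E F : Type*} [NormedAddCommGroup E] [InnerProductSpace ℝ E] [CompleteSpace E]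
  [NormedAddCommGroup F] [InnerProductSpace ℝ F] [CompleteSpace F]
  (K : Submodule ℝ E) [K.HasOrthogonalProjection] (Λ : E →L[ℝ] F)

noncomputable def projectionGram (s t : ℝ) : E →L[ℝ] E :=
  s • K.starProjection + t • (adjoint Λ ∘L Λ)

variable {K Λ}

theorem smul_projectionGram (a s t : ℝ) :
    a • projectionGram K Λ s t = projectionGram K Λ (a * s) (a * t) := by
  simp only [projectionGram, smul_add, smul_smul]

theorem inner_projectionGram_apply_self (s t : ℝ) (x : E) :
    ⟪projectionGram K Λ s t x, x⟫ = s * ‖K.starProjection x‖ ^ 2 + t * ‖Λ x‖ ^ 2 := by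
  simp only [projectionGram, add_apply, smul_apply, comp_apply, inner_add_left,
    real_inner_smul_left, adjoint_inner_left, real_inner_self_eq_norm_sq,
    K.real_inner_starProjection_left_eq_inner_starProjection x x]

theorem projectionGram_apply_residual {τ : ℝ} {Δ : F →L[ℝ] E}
    (hΔ : ∀ y, projectionGram K Λ (1 - τ) τ (Δ y) = τ • adjoint Λ y) (f : E) (e : F) :
    projectionGram K Λ (1 - τ) τ (f - Δ (Λ f) - Δ e)
      = (1 - τ) • K.starProjection f - τ • adjoint Λ e := by
  rw [map_sub, map_sub, hΔ, hΔ]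
  simp only [projectionGram, add_apply, smul_apply, comp_apply]
  abel

theorem inner_projectionGram_le_of_apply_eq {s t : ℝ} (hs : 0 ≤ s) (ht : 0 ≤ t) {f g : E} {e : F}
    (hg : projectionGram K Λ s t g = s • K.starProjection f - t • adjoint Λ e) :
    ⟪projectionGram K Λ s t g, g⟫ ≤ s * ‖K.starProjection f‖ ^ 2 + t * ‖e‖ ^ 2 := by
  have hcross : ⟪projectionGram K Λ s t g, g⟫
      = s * ⟪K.starProjection f, K.starProjection g⟫ - t * ⟪e, Λ g⟫ := by
    rw [hg, inner_sub_left, real_inner_smul_left, real_inner_smul_left, adjoint_inner_left,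
      K.real_inner_starProjection_left_eq_inner_starProjection]
  have hsq := inner_projectionGram_apply_self (K := K) (Λ := Λ) s t g
  have hP := norm_sub_sq_real (K.starProjection f) (K.starProjection g)
  have hΛ := norm_add_sq_real e (Λ g)
  nlinarith [mul_nonneg hs (sq_nonneg ‖K.starProjection f - K.starProjection g‖),
    mul_nonneg ht (sq_nonneg ‖e + Λ g‖)]

end ProjectionGram

theorem mul_div_add_self_right {c d : ℝ} (hc : 0 ≤ c) (hd : 0 ≤ d) :
    (c + d) * (d / (c + d)) = d := by
  rcases (add_nonneg hc hd).eq_or_lt with hcd | hcd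
  · rw [← hcd, zero_mul]; linarith
  · exact mul_div_cancel₀ d hcd.ne'

theorem stmt_15_general
    {H : Type*} [NormedAddCommGroup H] [InnerProductSpace ℝ H] [FiniteDimensional ℝ H]
    {m : ℕ} (V : Submodule ℝ H) (Λ : H →L[ℝ] EuclideanSpace ℝ (Fin m))
    (c d : ℝ) (hc : 0 ≤ c) (hd : 0 ≤ d)
    (hPSD : ∀ f : H, ‖f‖ ^ 2 ≤
      ⟪(c • (Vᗮ.subtypeL ∘L Vᗮ.orthogonalProjectionOnto)
        + d • (ContinuousLinearMap.adjoint Λ ∘L Λ)) f, f⟫)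
    (τ : ℝ) (hτ : τ = d / (c + d))
    (Δτ : EuclideanSpace ℝ (Fin m) →L[ℝ] H)
    (hΔτ : ∀ y : EuclideanSpace ℝ (Fin m),
      ((1 - τ) • (Vᗮ.subtypeL ∘L Vᗮ.orthogonalProjectionOnto)
        + τ • (ContinuousLinearMap.adjoint Λ ∘L Λ)) (Δτ y)
        = τ • ContinuousLinearMap.adjoint Λ y) :
    ∀ (f : H) (e : EuclideanSpace ℝ (Fin m)),
      ‖f - Δτ (Λ f) - Δτ e‖ ^ 2
        ≤ c * ‖(Vᗮ.orthogonalProjectionOnto f : H)‖ ^ 2 + d * ‖e‖ ^ 2 := by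
  intro f e
  have hτd : (c + d) * τ = d := hτ ▸ mul_div_add_self_right hc hd
  have hτc : (c + d) * (1 - τ) = c := by linear_combination -hτd
  have hM : projectionGram Vᗮ Λ c d = (c + d) • projectionGram Vᗮ Λ (1 - τ) τ := by
    rw [smul_projectionGram, hτc, hτd]
  have hMg : projectionGram Vᗮ Λ c d (f - Δτ (Λ f) - Δτ e)
      = c • Vᗮ.starProjection f - d • adjoint Λ e := by
    rw [hM, smul_apply, projectionGram_apply_residual hΔτ, smul_sub, smul_smul, smul_smul,
      hτc, hτd]
  calc ‖f - Δτ (Λ f) - Δτ e‖ ^ 2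
      ≤ ⟪projectionGram Vᗮ Λ c d (f - Δτ (Λ f) - Δτ e), f - Δτ (Λ f) - Δτ e⟫ := hPSD _
    _ ≤ c * ‖Vᗮ.starProjection f‖ ^ 2 + d * ‖e‖ ^ 2 := inner_projectionGram_le_of_apply_eq hc hd hMg

/-- If `c P_{V⊥} + d Λ*Λ ⪰ Id` and `τ = d/(c+d)`, then the regularization map `Δ_τ`
(characterized by `((1-τ)P_{V⊥} + τΛ*Λ) ∘ Δ_τ = τΛ*`) satisfies the semidefinite
relaxation constraint: `‖(Id - Δ_τΛ)f - Δ_τe‖² ≤ c‖P_{V⊥}f‖² + d‖e‖²`. -/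
theorem stmt_15
    {H : Type*} [NormedAddCommGroup H] [InnerProductSpace ℝ H] [FiniteDimensional ℝ H]
    {m : ℕ} (V : Submodule ℝ H) (Λ : H →L[ℝ] EuclideanSpace ℝ (Fin m))
    (hVker : V ⊓ LinearMap.ker (Λ : H →ₗ[ℝ] EuclideanSpace ℝ (Fin m)) = ⊥)
    (c d : ℝ) (hc : 0 ≤ c) (hd : 0 ≤ d)
    (hPSD : ∀ f : H, ‖f‖ ^ 2 ≤
      ⟪(c • (Vᗮ.subtypeL ∘L Vᗮ.orthogonalProjectionOnto)
        + d • (ContinuousLinearMap.adjoint Λ ∘L Λ)) f, f⟫)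
    (τ : ℝ) (hτ : τ = d / (c + d))
    (Δτ : EuclideanSpace ℝ (Fin m) →L[ℝ] H)
    (hΔτ : ∀ y : EuclideanSpace ℝ (Fin m),
      ((1 - τ) • (Vᗮ.subtypeL ∘L Vᗮ.orthogonalProjectionOnto)
        + τ • (ContinuousLinearMap.adjoint Λ ∘L Λ)) (Δτ y)
        = τ • ContinuousLinearMap.adjoint Λ y) :
    ∀ (f : H) (e : EuclideanSpace ℝ (Fin m)),
      ‖f - Δτ (Λ f) - Δτ e‖ ^ 2
        ≤ c * ‖(Vᗮ.orthogonalProjectionOnto f : H)‖ ^ 2 + d * ‖e‖ ^ 2 :=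
  stmt_15_general V Λ c d hc hd hPSD τ hτ Δτ hΔτ
end
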